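/- Let 𝒜 be a finite nonempty set, π a probability mass function with π(a) > 0 for all a, Q : 𝒜 → ℝ, α, β > 0, and π'(a) ∝ exp((Q(a)+β·log π(a))/(α+β)). Then Σ_a π'(a)Q(a) + α·H(π') − β·D_KL(π'‖π) ≥ Σ_a π(a)Q(a) + α·H(π); i.e., the regularized objective of π' is at least the entropy-regularized value of π itself (a policy-improvement property). -/

import Mathlib

/-!
Write `c = α + β` and `Z = ∑ b, exp ((Q b + β log π b) / c)`, so that `π'` is the softmax of
`(Q + β log π) / c` and `c log π' = Q + β log π - c log Z`. Substituting this into the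
regularized objective `J(ρ) = ∑ ρ Q + α H(ρ) - β D_KL(ρ‖π)` gives
`J(ρ) = c log Z - c D_KL(ρ‖π')` for every probability vector `ρ`. Hence `π'` maximizes `J`
by Gibbs' inequality, and `J(π)` is the entropy-regularized value of `π` since `D_KL(π‖π) = 0`.
-/

open Real Finset

section

variable {A : Type*} [Fintype A]

noncomputable def klDiv (ρ σ : A → ℝ) : ℝ := ∑ a, ρ a * log (ρ a / σ a)

theorem mul_log_div_ge_sub {x y : ℝ} (hx : 0 ≤ x) (hy : 0 < y) : x - y ≤ x * log (x / y) := by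
  rcases hx.eq_or_lt with rfl | hx
  · simpa using hy.le
  · have h := mul_le_mul_of_nonneg_left (one_sub_inv_le_log_of_pos (div_pos hx hy)) hx.le
    rwa [inv_div, mul_sub, mul_one, mul_div_cancel₀ _ hx.ne'] at h

theorem klDiv_nonneg {ρ σ : A → ℝ} (hρ : ∀ a, 0 ≤ ρ a) (hσ : ∀ a, 0 < σ a)
    (hsum : ∑ a, ρ a = ∑ a, σ a) : 0 ≤ klDiv ρ σ :=
  calc (0 : ℝ) = ∑ a, (ρ a - σ a) := by rw [sum_sub_distrib, hsum, sub_self]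
    _ ≤ klDiv ρ σ := sum_le_sum fun a _ => mul_log_div_ge_sub (hρ a) (hσ a)

theorem klDiv_self (ρ : A → ℝ) : klDiv ρ ρ = 0 :=
  sum_eq_zero fun a _ => by by_cases h : ρ a = 0 <;> simp [h]

noncomputable def softmax (f : A → ℝ) (a : A) : ℝ := exp (f a) / ∑ b, exp (f b)

section softmax

variable [Nonempty A] (f : A → ℝ)

theorem sum_exp_pos : 0 < ∑ b, exp (f b) :=
  sum_pos (fun b _ => exp_pos (f b)) univ_nonempty

theorem softmax_pos (a : A) : 0 < softmax f a :=
  div_pos (exp_pos _) (sum_exp_pos f)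

theorem sum_softmax : ∑ a, softmax f a = 1 := by
  simp only [softmax, ← sum_div, div_self (sum_exp_pos f).ne']

theorem log_softmax (a : A) : log (softmax f a) = f a - log (∑ b, exp (f b)) := by
  rw [softmax, log_div (exp_ne_zero _) (sum_exp_pos f).ne', log_exp]

end softmax

noncomputable def regularizedValue (Q : A → ℝ) (α β : ℝ) (ν ρ : A → ℝ) : ℝ :=
  ∑ a, ρ a * Q a + α * (-∑ a, ρ a * log (ρ a)) - β * klDiv ρ ν

theorem regularizedValue_self (Q : A → ℝ) (α β : ℝ) (ν : A → ℝ) :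
    regularizedValue Q α β ν ν = ∑ a, ν a * Q a + α * (-∑ a, ν a * log (ν a)) := by
  rw [regularizedValue, klDiv_self, mul_zero, sub_zero]

section softmaxPolicy

variable [Nonempty A] (Q : A → ℝ) {α β : ℝ} {ν : A → ℝ}

noncomputable abbrev softmaxPolicy (α β : ℝ) (ν : A → ℝ) : A → ℝ :=
  softmax fun a => (Q a + β * log (ν a)) / (α + β)

theorem regularizedValue_eq_sub_klDiv (hαβ : α + β ≠ 0) (hν : ∀ a, 0 < ν a) {ρ : A → ℝ}
    (hρ : ∑ a, ρ a = 1) :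
    regularizedValue Q α β ν ρ = (α + β) * log (∑ b, exp ((Q b + β * log (ν b)) / (α + β)))
      - (α + β) * klDiv ρ (softmaxPolicy Q α β ν) := by
  set Z := ∑ b, exp ((Q b + β * log (ν b)) / (α + β))
  have hterm : ∀ a, ρ a * Q a - α * (ρ a * log (ρ a)) - β * (ρ a * log (ρ a / ν a))
      = (α + β) * log Z * ρ a - (α + β) * (ρ a * log (ρ a / softmaxPolicy Q α β ν a)) := by
    intro a
    by_cases h0 : ρ a = 0
    · simp [h0]
    rw [log_div h0 (hν a).ne', log_div h0 (softmax_pos _ a).ne', log_softmax]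
    field_simp
    ring
  calc regularizedValue Q α β ν ρ
      = ∑ a, (ρ a * Q a - α * (ρ a * log (ρ a)) - β * (ρ a * log (ρ a / ν a))) := by
        simp only [regularizedValue, klDiv, sum_sub_distrib, ← mul_sum]; ring
    _ = _ := by simp only [hterm, klDiv, sum_sub_distrib, ← mul_sum, hρ, mul_one]

theorem regularizedValue_le_softmaxPolicy (hαβ : 0 < α + β) (hν : ∀ a, 0 < ν a)
    {ρ : A → ℝ} (hρ₀ : ∀ a, 0 ≤ ρ a) (hρ : ∑ a, ρ a = 1) :
    regularizedValue Q α β ν ρ ≤ regularizedValue Q α β ν (softmaxPolicy Q α β ν) := by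
  have hkl : 0 ≤ klDiv ρ (softmaxPolicy Q α β ν) :=
    klDiv_nonneg hρ₀ (softmax_pos _) (hρ.trans (sum_softmax _).symm)
  rw [regularizedValue_eq_sub_klDiv Q hαβ.ne' hν hρ,
    regularizedValue_eq_sub_klDiv Q hαβ.ne' hν (sum_softmax _), klDiv_self, mul_zero, sub_zero]
  exact sub_le_self _ (mul_nonneg hαβ.le hkl)

end softmaxPolicy

end

theorem stmt7 {A : Type*} [Fintype A] [Nonempty A]
    (p : A → ℝ) (hppos : ∀ a, 0 < p a) (hpsum : ∑ a, p a = 1)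
    (Q : A → ℝ) (α β : ℝ) (hα : 0 < α) (hβ : 0 < β)
    (p' : A → ℝ)
    (hp' : ∀ a, p' a = Real.exp ((Q a + β * Real.log (p a)) / (α + β)) /
        ∑ b, Real.exp ((Q b + β * Real.log (p b)) / (α + β))) :
    ∑ a, p a * Q a + α * (-∑ a, p a * Real.log (p a))
      ≤ ∑ a, p' a * Q a + α * (-∑ a, p' a * Real.log (p' a))
          - β * (∑ a, p' a * Real.log (p' a / p a)) := by
  obtain rfl : p' = softmaxPolicy Q α β p := funext hp'
  rw [← regularizedValue_self Q α β p]
  exact regularizedValue_le_softmaxPolicy Q (add_pos hα hβ) hppos (fun a => (hppos a).le) hpsum
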